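/- Assume θ ≤ 1/6 (θ > 0). Let q ∈ ℝ^p be a unit vector with Aᵀq ≠ 0 that satisfies the first- and second-order optimality conditions for minimizing f over the unit sphere: grad f(q) = 0 and vᵀ Hess f(q) v ≥ 0 for all v ∈ ℝ^p. Then q = a_i or q = −a_i for some column a_i of A. -/

import Mathlib

open Matrix MeasureTheory ProbabilityTheory Real
open scoped BigOperators ENNReal

noncomputable section

/-- squared Euclidean norm -/
def l2sq {m : ℕ} (v : Fin m → ℝ) : ℝ := ∑ i, v i ^ 2

/-- fourth power of the ℓ₄ norm -/
def l4p4 {m : ℕ} (v : Fin m → ℝ) : ℝ := ∑ i, v i ^ 4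

/-- Euclidean norm -/
def l2norm {m : ℕ} (v : Fin m → ℝ) : ℝ := Real.sqrt (l2sq v)

/-- squared sup-norm -/
def linfSq {m : ℕ} (v : Fin m → ℝ) : ℝ := ⨆ i, (v i) ^ 2

/-- projection onto the orthogonal complement of q -/
def proj {p : ℕ} (q : Fin p → ℝ) : Matrix (Fin p) (Fin p) ℝ := 1 - Matrix.vecMulVec q q

def zeta {p r : ℕ} (A : Matrix (Fin p) (Fin r) ℝ) (q : Fin p → ℝ) : Fin r → ℝ := Aᵀ *ᵥ q

/-- population objective -/
def fpop {p r : ℕ} (θ : ℝ) (A : Matrix (Fin p) (Fin r) ℝ) (q : Fin p → ℝ) : ℝ :=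
  -(1/4) * ((1 - θ) * l4p4 (zeta A q) + θ * (l2sq (zeta A q)) ^ 2)

/-- Riemannian gradient of the population objective -/
def gradf {p r : ℕ} (θ : ℝ) (A : Matrix (Fin p) (Fin r) ℝ) (q : Fin p → ℝ) : Fin p → ℝ :=
  -((proj q) *ᵥ ((1 - θ) • (A *ᵥ fun j => (zeta A q j) ^ 3)
      + (θ * l2sq (zeta A q)) • (A *ᵥ zeta A q)))

/-- Riemannian Hessian of the population objective -/
def hessf {p r : ℕ} (θ : ℝ) (A : Matrix (Fin p) (Fin r) ℝ) (q : Fin p → ℝ) :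
    Matrix (Fin p) (Fin p) ℝ :=
  -((1 - θ) • (proj q *
      ((3 : ℝ) • (A * Matrix.diagonal (fun j => (zeta A q j) ^ 2) * Aᵀ)
        - l4p4 (zeta A q) • (1 : Matrix (Fin p) (Fin p) ℝ)) * proj q))
  - θ • (proj q *
      (l2sq (zeta A q) • (A * Aᵀ)
        + (2 : ℝ) • (A * Aᵀ * Matrix.vecMulVec q q * (A * Aᵀ))
        - (l2sq (zeta A q)) ^ 2 • (1 : Matrix (Fin p) (Fin p) ℝ)) * proj q)

/-- quadratic form -/
def qform {p : ℕ} (M : Matrix (Fin p) (Fin p) ℝ) (v : Fin p → ℝ) : ℝ := v ⬝ᵥ (M *ᵥ v)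

/-- α(q) -/
def alphaf {p r : ℕ} (θ : ℝ) (A : Matrix (Fin p) (Fin r) ℝ) (q : Fin p → ℝ) : ℝ :=
  l4p4 (zeta A q) + (θ / (1 - θ)) * ((l2sq (zeta A q)) ^ 2 - l2sq (zeta A q))

/-- columns of X -/
def colX {r n : ℕ} (X : Matrix (Fin r) (Fin n) ℝ) (k : Fin n) : Fin r → ℝ := fun i => X i k

/-- finite-sample objective -/
def Ffun {p r n : ℕ} (θ σ : ℝ) (A : Matrix (Fin p) (Fin r) ℝ) (X : Matrix (Fin r) (Fin n) ℝ)
    (q : Fin p → ℝ) : ℝ :=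
  -(1 / (12 * θ * σ ^ 4 * n)) * ∑ k : Fin n, (q ⬝ᵥ (A *ᵥ colX X k)) ^ 4

/-- Riemannian gradient of the finite-sample objective -/
def gradF {p r n : ℕ} (θ σ : ℝ) (A : Matrix (Fin p) (Fin r) ℝ) (X : Matrix (Fin r) (Fin n) ℝ)
    (q : Fin p → ℝ) : Fin p → ℝ :=
  (-(1 / (3 * θ * σ ^ 4 * n))) •
    ((proj q) *ᵥ ∑ k : Fin n, ((q ⬝ᵥ (A *ᵥ colX X k)) ^ 3) • (A *ᵥ colX X k))

/-- Riemannian Hessian of the finite-sample objective -/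
def hessF {p r n : ℕ} (θ σ : ℝ) (A : Matrix (Fin p) (Fin r) ℝ) (X : Matrix (Fin r) (Fin n) ℝ)
    (q : Fin p → ℝ) : Matrix (Fin p) (Fin p) ℝ :=
  (-(1 / (3 * θ * σ ^ 4 * n))) •
    ∑ k : Fin n, proj q *
      ((3 * (q ⬝ᵥ (A *ᵥ colX X k)) ^ 2) • Matrix.vecMulVec (A *ᵥ colX X k) (A *ᵥ colX X k)
        - ((q ⬝ᵥ (A *ᵥ colX X k)) ^ 4) • (1 : Matrix (Fin p) (Fin p) ℝ)) * proj q

/-- spectral norm of a rectangular matrix -/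
def opNorm {m n : ℕ} (M : Matrix (Fin m) (Fin n) ℝ) : ℝ :=
  ‖LinearMap.toContinuousLinearMap (Matrix.toEuclideanLin M)‖

/-- Bernoulli(θ) law on ℝ -/
def bernoulliReal (θ : ℝ) : Measure ℝ :=
  ENNReal.ofReal θ • Measure.dirac (1 : ℝ) + ENNReal.ofReal (1 - θ) • Measure.dirac (0 : ℝ)

/-- Bernoulli–Gaussian law BG(θ, σ²) on ℝ -/
def bgLaw (θ σ2 : ℝ) : Measure ℝ :=
  ((bernoulliReal θ).prod (gaussianReal 0 σ2.toNNReal)).map fun p => p.1 * p.2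

/-- law of a random vector in ℝ^r with i.i.d. BG(θ, σ²) entries -/
def bgVec (r : ℕ) (θ σ2 : ℝ) : Measure (Fin r → ℝ) :=
  Measure.pi fun _ : Fin r => bgLaw θ σ2

/-- law of a random r×n matrix with i.i.d. BG(θ, σ²) entries -/
def bgMatrix (r n : ℕ) (θ σ2 : ℝ) : Measure (Fin r → Fin n → ℝ) :=
  Measure.pi fun _ : Fin r => Measure.pi fun _ : Fin n => bgLaw θ σ2

/-!
Write `ζ = Aᵀ q`. Since `gradf θ A q = -P (A ∇h(ζ))` for the quartic `h` of `quarticGrad`,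
criticality says `A ∇h(ζ) = λ q`; applying `Aᵀ` gives `∇h(ζ) = λ ζ` with `λ = ζ ⬝ᵥ ∇h(ζ) > 0`, and
then `q = A ζ`, so `‖ζ‖ = 1` and all nonzero coordinates of `ζ` share one square `c`. If two
coordinates `j ≠ k` were nonzero, `v = A (ζ_k e_j - ζ_j e_k)` would be orthogonal to `q` with
`vᵀ Hess f(q) v = -4 (1 - θ) c² < 0`. So `ζ = ±e_i`, i.e. `q = ±a_i`.
-/

theorem l2sq_eq_dotProduct {m : ℕ} (v : Fin m → ℝ) : l2sq v = v ⬝ᵥ v := by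
  simp only [l2sq, dotProduct, sq]

theorem l4p4_pos {m : ℕ} {v : Fin m → ℝ} (hv : v ≠ 0) : 0 < l4p4 v := by
  obtain ⟨j, hj⟩ := Function.ne_iff.mp hv
  exact (pow_pos (sq_pos_of_ne_zero hj) 2).trans_le <| by
    simpa [l4p4, ← pow_mul] using
      Finset.single_le_sum (f := fun i => v i ^ 4) (fun i _ => by positivity) (Finset.mem_univ j)

theorem l4p4_eq_mul_l2sq {m : ℕ} {v : Fin m → ℝ} {c : ℝ} (h : ∀ j, v j ≠ 0 → v j ^ 2 = c) :
    l4p4 v = c * l2sq v := by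
  rw [l4p4, l2sq, Finset.mul_sum]
  refine Finset.sum_congr rfl fun j _ => ?_
  by_cases hj : v j = 0
  · simp [hj]
  · rw [← h j hj]; ring

section proj

variable {p : ℕ}

theorem proj_mulVec (q x : Fin p → ℝ) : proj q *ᵥ x = x - (q ⬝ᵥ x) • q := by
  rw [proj, sub_mulVec, one_mulVec, vecMulVec_mulVec, op_smul_eq_smul]

theorem eq_smul_of_proj_mulVec_eq_zero {q x : Fin p → ℝ} (h : proj q *ᵥ x = 0) :
    x = (q ⬝ᵥ x) • q := by
  rwa [proj_mulVec, sub_eq_zero] at h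

theorem proj_mulVec_of_dotProduct_eq_zero {q v : Fin p → ℝ} (hv : q ⬝ᵥ v = 0) :
    proj q *ᵥ v = v := by
  rw [proj_mulVec, hv, zero_smul, sub_zero]

theorem dotProduct_proj_mulVec_of_dotProduct_eq_zero {q v : Fin p → ℝ} (hv : q ⬝ᵥ v = 0)
    (x : Fin p → ℝ) : v ⬝ᵥ (proj q *ᵥ x) = v ⬝ᵥ x := by
  rw [proj_mulVec, dotProduct_sub, dotProduct_smul, dotProduct_comm v q, hv, smul_zero, sub_zero]

end proj

section qform

variable {p : ℕ} (M N : Matrix (Fin p) (Fin p) ℝ) (v : Fin p → ℝ)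

theorem qform_add : qform (M + N) v = qform M v + qform N v := by
  simp only [qform, add_mulVec, dotProduct_add]

theorem qform_sub : qform (M - N) v = qform M v - qform N v := by
  simp only [qform, sub_mulVec, dotProduct_sub]

theorem qform_neg : qform (-M) v = -qform M v := by
  simp only [qform, neg_mulVec, dotProduct_neg]

theorem qform_smul (a : ℝ) : qform (a • M) v = a * qform M v := by
  simp only [qform, smul_mulVec, dotProduct_smul, smul_eq_mul]

theorem qform_one : qform 1 v = l2sq v := by
  rw [qform, one_mulVec, l2sq_eq_dotProduct]

theorem qform_proj_mul_mul_proj {q : Fin p → ℝ} (hv : q ⬝ᵥ v = 0) :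
    qform (proj q * M * proj q) v = qform M v := by
  rw [qform, ← mulVec_mulVec, ← mulVec_mulVec, proj_mulVec_of_dotProduct_eq_zero hv,
    dotProduct_proj_mulVec_of_dotProduct_eq_zero hv, qform]

end qform

section orthonormal

variable {p r : ℕ} {A : Matrix (Fin p) (Fin r) ℝ}

theorem transpose_mulVec_mulVec (hA : Aᵀ * A = 1) (w : Fin r → ℝ) : Aᵀ *ᵥ (A *ᵥ w) = w := by
  rw [mulVec_mulVec, hA, one_mulVec]

theorem dotProduct_mulVec_eq_zeta_dotProduct (q : Fin p → ℝ) (w : Fin r → ℝ) :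
    q ⬝ᵥ (A *ᵥ w) = zeta A q ⬝ᵥ w := by
  rw [dotProduct_mulVec, zeta, mulVec_transpose]

theorem mulVec_dotProduct_mulVec (hA : Aᵀ * A = 1) (u w : Fin r → ℝ) :
    (A *ᵥ u) ⬝ᵥ (A *ᵥ w) = u ⬝ᵥ w := by
  rw [dotProduct_mulVec_eq_zeta_dotProduct, zeta, transpose_mulVec_mulVec hA]

theorem l2sq_mulVec (hA : Aᵀ * A = 1) (w : Fin r → ℝ) : l2sq (A *ᵥ w) = l2sq w := by
  rw [l2sq_eq_dotProduct, l2sq_eq_dotProduct, mulVec_dotProduct_mulVec hA]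

theorem eq_smul_zeta_of_proj_mulVec_eq_zero (hA : Aᵀ * A = 1) {q : Fin p → ℝ} {u : Fin r → ℝ}
    (h : proj q *ᵥ (A *ᵥ u) = 0) : u = (zeta A q ⬝ᵥ u) • zeta A q := by
  have := congrArg (Aᵀ *ᵥ ·) (eq_smul_of_proj_mulVec_eq_zero h)
  simp only [transpose_mulVec_mulVec hA, mulVec_smul, dotProduct_mulVec_eq_zeta_dotProduct]
    at this
  exact this

theorem mulVec_zeta_of_proj_mulVec_eq_zero (hA : Aᵀ * A = 1) {q : Fin p → ℝ} {u : Fin r → ℝ}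
    (h : proj q *ᵥ (A *ᵥ u) = 0) (hu : zeta A q ⬝ᵥ u ≠ 0) : A *ᵥ zeta A q = q := by
  refine smul_right_injective _ hu (?_ : (zeta A q ⬝ᵥ u) • _ = _)
  rw [← mulVec_smul, ← eq_smul_zeta_of_proj_mulVec_eq_zero hA h,
    ← dotProduct_mulVec_eq_zeta_dotProduct]
  exact eq_smul_of_proj_mulVec_eq_zero h

theorem exists_mulVec_eq_col_or_neg_col (A : Matrix (Fin p) (Fin r) ℝ) {w : Fin r → ℝ}
    (hw : l2sq w = 1) (hsupp : ∀ j k, w j ≠ 0 → w k ≠ 0 → j = k) :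
    ∃ i, A *ᵥ w = A.col i ∨ A *ᵥ w = -A.col i := by
  obtain ⟨i, hi⟩ : ∃ i, w i ≠ 0 := by
    by_contra! h
    simp [l2sq, h] at hw
  have hw_eq : w = Pi.single i (w i) := by
    ext j
    by_cases hj : j = i
    · subst hj; simp
    · simp only [Pi.single_apply, hj, if_false]
      by_contra hj'
      exact hj (hsupp j i hj' hi)
  have hsq : w i ^ 2 = 1 := by
    rw [← hw, hw_eq, l2sq, Fintype.sum_eq_single i fun j hj => by simp [hj]]
  refine ⟨i, ?_⟩
  rw [hw_eq, mulVec_single, op_smul_eq_smul]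
  rcases sq_eq_one_iff.mp hsq with h | h <;> simp [h]

end orthonormal

/-- The gradient of `ζ ↦ ¼ ((1 - θ) ‖ζ‖₄⁴ + θ ‖ζ‖₂⁴)`, so that `-A *ᵥ quarticGrad θ (Aᵀ *ᵥ q)` is
the Euclidean gradient of `fpop θ A` at `q`. -/
def quarticGrad {r : ℕ} (θ : ℝ) (ζ : Fin r → ℝ) : Fin r → ℝ :=
  (1 - θ) • (fun j => ζ j ^ 3) + (θ * l2sq ζ) • ζ

section quarticGrad

variable {r : ℕ} {θ : ℝ} {ζ : Fin r → ℝ}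

theorem gradf_eq {p : ℕ} (θ : ℝ) (A : Matrix (Fin p) (Fin r) ℝ) (q : Fin p → ℝ) :
    gradf θ A q = -(proj q *ᵥ (A *ᵥ quarticGrad θ (zeta A q))) := by
  simp only [gradf, quarticGrad, mulVec_add, mulVec_smul]

theorem dotProduct_quarticGrad (θ : ℝ) (ζ : Fin r → ℝ) :
    ζ ⬝ᵥ quarticGrad θ ζ = (1 - θ) * l4p4 ζ + θ * l2sq ζ ^ 2 := by
  have h4 : ζ ⬝ᵥ (fun j => ζ j ^ 3) = l4p4 ζ := Finset.sum_congr rfl fun j _ => by ring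
  rw [quarticGrad, dotProduct_add, dotProduct_smul, dotProduct_smul, h4, ← l2sq_eq_dotProduct,
    smul_eq_mul, smul_eq_mul]
  ring

theorem dotProduct_quarticGrad_pos (hθ0 : 0 ≤ θ) (hθ1 : θ < 1) (hζ : ζ ≠ 0) :
    0 < ζ ⬝ᵥ quarticGrad θ ζ := by
  rw [dotProduct_quarticGrad]
  exact add_pos_of_pos_of_nonneg (mul_pos (sub_pos.mpr hθ1) (l4p4_pos hζ)) (by positivity)

theorem sq_eq_of_quarticGrad_eq_smul (hθ : θ ≠ 1) {μ : ℝ} (h : quarticGrad θ ζ = μ • ζ) {j : Fin r}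
    (hj : ζ j ≠ 0) : ζ j ^ 2 = (μ - θ * l2sq ζ) / (1 - θ) := by
  have hcoord := congrFun h j
  simp only [quarticGrad, Pi.add_apply, Pi.smul_apply, smul_eq_mul] at hcoord
  rw [eq_div_iff (sub_ne_zero.mpr hθ.symm)]
  refine mul_right_cancel₀ hj ?_
  linear_combination hcoord

end quarticGrad

section hessian

variable {p r : ℕ} {A : Matrix (Fin p) (Fin r) ℝ}

theorem qform_hessf_mulVec (hA : Aᵀ * A = 1) (θ : ℝ) {q : Fin p → ℝ} {w : Fin r → ℝ}
    (hw : zeta A q ⬝ᵥ w = 0) :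
    qform (hessf θ A q) (A *ᵥ w) =
      -((1 - θ) * (3 * ∑ j, (zeta A q j * w j) ^ 2 - l4p4 (zeta A q) * l2sq w))
        - θ * (l2sq (zeta A q) - l2sq (zeta A q) ^ 2) * l2sq w := by
  have hv : q ⬝ᵥ (A *ᵥ w) = 0 := by rwa [dotProduct_mulVec_eq_zeta_dotProduct]
  have hAAt : (A * Aᵀ) *ᵥ (A *ᵥ w) = A *ᵥ w := by
    rw [← mulVec_mulVec, transpose_mulVec_mulVec hA]
  have hdiag : qform (A * diagonal (fun j => zeta A q j ^ 2) * Aᵀ) (A *ᵥ w) =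
      ∑ j, (zeta A q j * w j) ^ 2 := by
    rw [qform, ← mulVec_mulVec, ← mulVec_mulVec, transpose_mulVec_mulVec hA,
      mulVec_dotProduct_mulVec hA]
    simp only [dotProduct, mulVec_diagonal]
    exact Finset.sum_congr rfl fun j _ => by ring
  have hrank_one : qform (A * Aᵀ * vecMulVec q q * (A * Aᵀ)) (A *ᵥ w) = 0 := by
    rw [qform, ← mulVec_mulVec, hAAt, ← mulVec_mulVec, vecMulVec_mulVec, hv, MulOpposite.op_zero,
      zero_smul, mulVec_zero, dotProduct_zero]
  have hgram : qform (A * Aᵀ) (A *ᵥ w) = l2sq w := by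
    rw [qform, hAAt, ← l2sq_eq_dotProduct, l2sq_mulVec hA]
  simp only [hessf, qform_sub, qform_neg, qform_smul, qform_add, qform_one,
    qform_proj_mul_mul_proj _ _ hv, hdiag, hrank_one, hgram, l2sq_mulVec hA]
  ring

theorem eq_of_zeta_ne_zero (hA : Aᵀ * A = 1) {θ : ℝ} (hθ : θ < 1) {q : Fin p → ℝ}
    (hS : l2sq (zeta A q) = 1) {c : ℝ} (hc : ∀ j, zeta A q j ≠ 0 → zeta A q j ^ 2 = c)
    (hhess : ∀ v : Fin p → ℝ, 0 ≤ qform (hessf θ A q) v) {j k : Fin r}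
    (hj : zeta A q j ≠ 0) (hk : zeta A q k ≠ 0) : j = k := by
  by_contra hjk
  set ζ := zeta A q
  set w : Fin r → ℝ := ζ k • Pi.single j 1 - ζ j • Pi.single k 1
  have hsum (f : ℝ → ℝ → ℝ) (hf : ∀ x, f x 0 = 0) :
      ∑ m, f (ζ m) (w m) = f (ζ j) (ζ k) + f (ζ k) (-ζ j) := by
    rw [Fintype.sum_eq_add j k hjk fun m hm => by simp [w, hm.1, hm.2, hf]]
    simp [w, hjk, Ne.symm hjk]
  have hw : ζ ⬝ᵥ w = 0 := by
    rw [dotProduct, hsum (· * ·) fun _ => mul_zero _]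
    ring
  have hl2 : l2sq w = 2 * c := by
    rw [l2sq, hsum (fun _ y => y ^ 2) fun _ => by simp]
    linear_combination hc j hj + hc k hk
  have hmixed : ∑ m, (ζ m * w m) ^ 2 = 2 * c ^ 2 := by
    rw [hsum (fun x y => (x * y) ^ 2) fun _ => by simp]
    linear_combination 2 * ζ k ^ 2 * hc j hj + 2 * c * hc k hk
  have hcurv := hhess (A *ᵥ w)
  rw [qform_hessf_mulVec hA θ hw, l4p4_eq_mul_l2sq hc, hS, hl2, hmixed] at hcurv
  have hc0 : 0 < c := by rw [← hc j hj]; positivity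
  nlinarith [mul_pos (sub_pos.mpr hθ) (pow_pos hc0 2)]

end hessian

theorem stmt2_general (p r : ℕ)
    (A : Matrix (Fin p) (Fin r) ℝ) (hA : Aᵀ * A = 1)
    (θ : ℝ) (hθ0 : 0 < θ) (hθ : θ ≤ 1/6)
    (q : Fin p → ℝ) (hq : l2sq q = 1) (hnz : zeta A q ≠ 0)
    (hgrad : gradf θ A q = 0)
    (hhess : ∀ v : Fin p → ℝ, 0 ≤ qform (hessf θ A q) v) :
    ∃ i : Fin r, q = (fun k => A k i) ∨ q = (fun k => -A k i) := by
  have hθ1 : θ < 1 := by linarith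
  have hcrit : proj q *ᵥ (A *ᵥ quarticGrad θ (zeta A q)) = 0 := by
    rwa [gradf_eq, neg_eq_zero] at hgrad
  have hqA : A *ᵥ zeta A q = q := mulVec_zeta_of_proj_mulVec_eq_zero hA hcrit
    (dotProduct_quarticGrad_pos hθ0.le hθ1 hnz).ne'
  have hS : l2sq (zeta A q) = 1 := by rw [← l2sq_mulVec hA, hqA, hq]
  have hc (j : Fin r) := sq_eq_of_quarticGrad_eq_smul (j := j) hθ1.ne
    (eq_smul_zeta_of_proj_mulVec_eq_zero hA hcrit)
  obtain ⟨i, hi⟩ := exists_mulVec_eq_col_or_neg_col A hS fun j k =>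
    eq_of_zeta_ne_zero hA hθ1 hS hc hhess
  rw [hqA] at hi
  exact ⟨i, hi⟩

theorem stmt2 (p r : ℕ) (hr : 1 ≤ r) (hrp : r ≤ p)
    (A : Matrix (Fin p) (Fin r) ℝ) (hA : Aᵀ * A = 1)
    (θ : ℝ) (hθ0 : 0 < θ) (hθ : θ ≤ 1/6)
    (q : Fin p → ℝ) (hq : l2sq q = 1) (hnz : zeta A q ≠ 0)
    (hgrad : gradf θ A q = 0)
    (hhess : ∀ v : Fin p → ℝ, 0 ≤ qform (hessf θ A q) v) :
    ∃ i : Fin r, q = (fun k => A k i) ∨ q = (fun k => -A k i) :=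
  stmt2_general p r A hA θ hθ0 hθ q hq hnz hgrad hhess

end
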